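/- Let T ⊆ X_0 be a generalised nice set with T ∩ X = ∅. Then exactly one of the following holds: (a) there is i ∈ I with T = {{0,i},{i,i},{0,0}}; (b) {0,0} ∈ T ⊆ X_F where X_F = {{0,i} : i ∈ I_0}; (c) T ⊆ {{i,i} : i ∈ I}. Conversely, every subset of X_0 - X of one of these three forms is a generalised nice set. -/
import Mathlib


/-- The seven lines of the Fano plane. -/
def fanoLines : List (List ℕ) := [[1,2,5],[5,6,7],[7,4,1],[1,3,6],[6,4,2],[2,7,3],[3,4,5]]

/-- The Fano operation `*` extended to `I₀ = {0,…,7}`: `0*i = i*0 = i`, `i*i = 0`,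
and for distinct `i, j ∈ I` it is the third point on the line through `i` and `j`. -/
def fstar (i j : ℕ) : ℕ :=
  if i = j then 0
  else if i = 0 then j
  else if j = 0 then i
  else
    match fanoLines.find? (fun l => l.contains i && l.contains j) with
    | some l => (l.filter (fun x => x != i && x != j)).headD 0
    | none => 0

/-- The points of the Fano plane. -/
def I : Set ℕ := {1,2,3,4,5,6,7}

/-- The extended point set `I₀ = I ∪ {0}`. -/
def I0 : Set ℕ := {0,1,2,3,4,5,6,7}

/-- `X₀`: unordered pairs from `I₀` (repetitions allowed). -/
def X0 : Set (Sym2 ℕ) := {z | ∃ i ∈ I0, ∃ j ∈ I0, z = s(i,j)}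

/-- `X`: unordered pairs of two distinct points of `I`. -/
def X : Set (Sym2 ℕ) := {z | ∃ i ∈ I, ∃ j ∈ I, i ≠ j ∧ z = s(i,j)}

/-- `X_F = {{0,i} : i ∈ I₀}`. -/
def XF : Set (Sym2 ℕ) := {z | ∃ i ∈ I0, z = s(0,i)}

/-- `P_{a,b,c}`. -/
def P (a b c : ℕ) : Set (Sym2 ℕ) :=
  {s(a,b), s(b,c), s(c,a), s(a, fstar b c), s(b, fstar c a), s(c, fstar a b)}

/-- A generalised nice set: a subset of `X₀` such that `{a,b},{a*b,c} ∈ T` implies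
`P_{a,b,c} ⊆ T` for all `a, b, c ∈ I₀`. -/
def IsGNS (T : Set (Sym2 ℕ)) : Prop :=
  T ⊆ X0 ∧ ∀ a ∈ I0, ∀ b ∈ I0, ∀ c ∈ I0,
    s(a,b) ∈ T → s(fstar a b, c) ∈ T → P a b c ⊆ T

/-- A nice set: a subset of `X` such that for all generative `i, j, k ∈ I`,
`{i,j},{i*j,k} ∈ T` implies `P_{i,j,k} ⊆ T`. -/
def IsNice (T : Set (Sym2 ℕ)) : Prop :=
  T ⊆ X ∧ ∀ i ∈ I, ∀ j ∈ I, ∀ k ∈ I, i ≠ j → i ≠ k → j ≠ k → k ≠ fstar i j →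
    s(i,j) ∈ T → s(fstar i j, k) ∈ T → P i j k ⊆ T

/-- The smallest generalised nice set containing `S`. -/
def gnsClosure (S : Set (Sym2 ℕ)) : Set (Sym2 ℕ) := ⋂₀ {T | IsGNS T ∧ S ⊆ T}

/-- A collineation of the Fano plane, realised as a permutation of `ℕ` fixing the
complement of `I` and preserving collinearity. -/
def IsColl (σ : Equiv.Perm ℕ) : Prop :=
  (∀ n, n ∉ I → σ n = n) ∧
  ∀ i ∈ I, ∀ j ∈ I, i ≠ j → σ (fstar i j) = fstar (σ i) (σ j)

lemma fstar_self (i : ℕ) : fstar i i = 0 := by simp [fstar]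
lemma fstar_zl {i : ℕ} (h : i ≠ 0) : fstar 0 i = i := by simp [fstar, Ne.symm h]
lemma fstar_zr {i : ℕ} (h : i ≠ 0) : fstar i 0 = i := by simp [fstar, h]

lemma zero_mem_I0 : (0:ℕ) ∈ I0 := by simp [I0]
lemma mem_I0_of_mem_I {i : ℕ} (h : i ∈ I) : i ∈ I0 := by simp [I, I0] at *; tauto
lemma ne_zero_of_mem_I {i : ℕ} (h : i ∈ I) : i ≠ 0 := by simp [I] at h; omega
lemma mem_I_of_ne {i : ℕ} (h : i ∈ I0) (h0 : i ≠ 0) : i ∈ I := by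
  simp [I, I0] at *; tauto

lemma gnsL1 {T : Set (Sym2 ℕ)} (hg : IsGNS T) {k : ℕ} (hk : k ∈ I0)
    (h : s(0,k) ∈ T) : s(0,0) ∈ T := by
  rcases eq_or_ne k 0 with rfl | h0
  · exact h
  have hP := hg.2 0 zero_mem_I0 k hk 0 zero_mem_I0 h
    (by rw [fstar_zl h0, Sym2.eq_swap]; exact h)
  exact hP (by simp only [P, Set.mem_insert_iff, Set.mem_singleton_iff]; tauto)

lemma gnsL2 {T : Set (Sym2 ℕ)} (hg : IsGNS T) {i : ℕ} (hi : i ∈ I)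
    (hii : s(i,i) ∈ T) (h00 : s(0,0) ∈ T) : s(0,i) ∈ T := by
  have hP := hg.2 i (mem_I0_of_mem_I hi) i (mem_I0_of_mem_I hi) 0 zero_mem_I0 hii
    (by rw [fstar_self]; exact h00)
  have : s(i,0) ∈ T :=
    hP (by simp only [P, Set.mem_insert_iff, Set.mem_singleton_iff]; tauto)
  rwa [Sym2.eq_swap] at this

lemma gnsL3 {T : Set (Sym2 ℕ)} (hg : IsGNS T) (hd : T ∩ X = ∅) {i k : ℕ}
    (hi : i ∈ I) (hk : k ∈ I) (hik : i ≠ k) (hii : s(i,i) ∈ T)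
    (h0k : s(0,k) ∈ T) : False := by
  have hP := hg.2 i (mem_I0_of_mem_I hi) i (mem_I0_of_mem_I hi) k (mem_I0_of_mem_I hk) hii
    (by rw [fstar_self]; exact h0k)
  have h1 : s(i,k) ∈ T :=
    hP (by simp only [P, Set.mem_insert_iff, Set.mem_singleton_iff]; tauto)
  have h2 : s(i,k) ∈ X := ⟨i, hi, k, hk, hik, rfl⟩
  exact absurd hd (by rw [Set.eq_empty_iff_forall_notMem]; push_neg; exact ⟨_, h1, h2⟩)

lemma gnsL4 {T : Set (Sym2 ℕ)} (hsub : T ⊆ X0) (hd : T ∩ X = ∅) {z : Sym2 ℕ}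
    (hz : z ∈ T) : (∃ k ∈ I0, z = s(0,k)) ∨ (∃ i ∈ I, z = s(i,i)) := by
  obtain ⟨i, hi, j, hj, rfl⟩ := hsub hz
  rcases eq_or_ne i 0 with rfl | hi0
  · exact Or.inl ⟨j, hj, rfl⟩
  rcases eq_or_ne j 0 with rfl | hj0
  · exact Or.inl ⟨i, hi, Sym2.eq_swap⟩
  rcases eq_or_ne i j with rfl | hij
  · exact Or.inr ⟨i, mem_I_of_ne hi hi0, rfl⟩
  exfalso
  have h2 : s(i,j) ∈ X := ⟨i, mem_I_of_ne hi hi0, j, mem_I_of_ne hj hj0, hij, rfl⟩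
  exact absurd hd (by rw [Set.eq_empty_iff_forall_notMem]; push_neg; exact ⟨_, hz, h2⟩)

lemma pair01 {i : ℕ} (hne : i ≠ 0) {x y : ℕ} (hx : x = 0 ∨ x = i) (hy : y = 0 ∨ y = i) :
    s(x,y) ∈ ({s(0,i), s(i,i), s(0,0)} : Set (Sym2 ℕ)) := by
  rcases hx with rfl | rfl <;> rcases hy with rfl | rfl <;>
    simp [Set.mem_insert_iff, Sym2.eq_iff]

lemma fstar01 {i : ℕ} (hne : i ≠ 0) {x y : ℕ} (hx : x = 0 ∨ x = i) (hy : y = 0 ∨ y = i) :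
    fstar x y = 0 ∨ fstar x y = i := by
  rcases hx with rfl | rfl <;> rcases hy with rfl | rfl <;>
    simp [fstar_self, fstar_zl hne, fstar_zr hne]

theorem gns_empty_inter_trichotomy :
    (∀ T : Set (Sym2 ℕ), IsGNS T → T ∩ X = ∅ →
      ((∃ i ∈ I, T = {s(0,i), s(i,i), s(0,0)}) ∧
          ¬(s(0,0) ∈ T ∧ T ⊆ XF) ∧ ¬(T ⊆ {z | ∃ i ∈ I, z = s(i,i)})) ∨
      (¬(∃ i ∈ I, T = {s(0,i), s(i,i), s(0,0)}) ∧
          (s(0,0) ∈ T ∧ T ⊆ XF) ∧ ¬(T ⊆ {z | ∃ i ∈ I, z = s(i,i)})) ∨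
      (¬(∃ i ∈ I, T = {s(0,i), s(i,i), s(0,0)}) ∧
          ¬(s(0,0) ∈ T ∧ T ⊆ XF) ∧ (T ⊆ {z | ∃ i ∈ I, z = s(i,i)}))) ∧
    (∀ T : Set (Sym2 ℕ), T ⊆ X0 → T ∩ X = ∅ →
      ((∃ i ∈ I, T = {s(0,i), s(i,i), s(0,0)}) ∨
        (s(0,0) ∈ T ∧ T ⊆ XF) ∨
        (T ⊆ {z | ∃ i ∈ I, z = s(i,i)})) →
      IsGNS T) := by
  constructor
  · -- forward direction
    intro T hg hd
    by_cases hF : ∃ k ∈ I0, s(0,k) ∈ T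
    · obtain ⟨k, hk, h0k⟩ := hF
      have h00 : s(0,0) ∈ T := gnsL1 hg hk h0k
      by_cases hD : ∃ i ∈ I, s(i,i) ∈ T
      · -- case (a)
        obtain ⟨i, hi, hii⟩ := hD
        have hne : i ≠ 0 := ne_zero_of_mem_I hi
        have h0i : s(0,i) ∈ T := gnsL2 hg hi hii h00
        left
        refine ⟨⟨i, hi, ?_⟩, ?_, ?_⟩
        · apply Set.Subset.antisymm
          · intro z hz
            rcases gnsL4 hg.1 hd hz with ⟨m, hm, rfl⟩ | ⟨j, hj, rfl⟩
            · rcases eq_or_ne m 0 with rfl | hm0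
              · simp
              rcases eq_or_ne m i with rfl | hmi
              · simp
              exact absurd (gnsL3 hg hd hi (mem_I_of_ne hm hm0) (Ne.symm hmi) hii hz) id
            · rcases eq_or_ne j i with rfl | hji
              · simp
              exact absurd (gnsL3 hg hd hj hi hji hz h0i) id
          · intro z hz
            simp only [Set.mem_insert_iff, Set.mem_singleton_iff] at hz
            rcases hz with rfl | rfl | rfl <;> assumption
        · rintro ⟨-, hXF⟩
          obtain ⟨m, hm, hme⟩ := hXF hii
          rw [Sym2.eq_iff] at hme
          omega
        · intro h
          obtain ⟨j, hj, hje⟩ := h h00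
          rw [Sym2.eq_iff] at hje
          have := ne_zero_of_mem_I hj
          omega
      · -- case (b)
        right; left
        push_neg at hD
        refine ⟨?_, ⟨h00, ?_⟩, ?_⟩
        · rintro ⟨i, hi, rfl⟩
          exact hD i hi (by simp)
        · intro z hz
          rcases gnsL4 hg.1 hd hz with ⟨m, hm, rfl⟩ | ⟨j, hj, rfl⟩
          · exact ⟨m, hm, rfl⟩
          · exact absurd hz (hD j hj)
        · intro h
          obtain ⟨j, hj, hje⟩ := h h00
          rw [Sym2.eq_iff] at hje
          have := ne_zero_of_mem_I hj
          omega
    · -- case (c)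
      right; right
      push_neg at hF
      have hc : T ⊆ {z | ∃ i ∈ I, z = s(i,i)} := by
        intro z hz
        rcases gnsL4 hg.1 hd hz with ⟨m, hm, rfl⟩ | ⟨j, hj, rfl⟩
        · exact absurd hz (hF m hm)
        · exact ⟨j, hj, rfl⟩
      refine ⟨?_, ?_, hc⟩
      · rintro ⟨i, hi, rfl⟩
        exact hF 0 zero_mem_I0 (by simp)
      · rintro ⟨h00, -⟩
        exact hF 0 zero_mem_I0 h00
  · -- converse direction
    intro T hsub hd hcase
    refine ⟨hsub, ?_⟩
    intro a ha b hb c hc hab h2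
    rcases hcase with ⟨i, hi, rfl⟩ | ⟨h00, hXF⟩ | hdiag
    · -- case (a)
      have hne : i ≠ 0 := ne_zero_of_mem_I hi
      have hmem : ∀ x y : ℕ, s(x,y) ∈ ({s(0,i), s(i,i), s(0,0)} : Set (Sym2 ℕ)) →
          (x = 0 ∨ x = i) ∧ (y = 0 ∨ y = i) := by
        intro x y hxy
        simp only [Set.mem_insert_iff, Set.mem_singleton_iff, Sym2.eq_iff] at hxy
        constructor <;> omega
      obtain ⟨hax, hbx⟩ := hmem a b hab
      obtain ⟨-, hcx⟩ := hmem _ c h2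
      rintro z (rfl | rfl | rfl | rfl | rfl | rfl)
      · exact pair01 hne hax hbx
      · exact pair01 hne hbx hcx
      · exact pair01 hne hcx hax
      · exact pair01 hne hax (fstar01 hne hbx hcx)
      · exact pair01 hne hbx (fstar01 hne hcx hax)
      · exact pair01 hne hcx (fstar01 hne hax hbx)
    · -- case (b)
      have hz1 : ∀ x y : ℕ, s(x,y) ∈ T → x = 0 ∨ y = 0 := by
        intro x y hxy
        obtain ⟨m, hm, hme⟩ := hXF hxy
        rw [Sym2.eq_iff] at hme
        omega
      rcases hz1 a b hab with rfl | rfl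
      · rcases eq_or_ne b 0 with rfl | hb0
        · rw [fstar_self] at h2
          rintro z (rfl | rfl | rfl | rfl | rfl | rfl)
          · exact hab
          · exact h2
          · rw [Sym2.eq_swap]; exact h2
          · rcases eq_or_ne c 0 with rfl | hc0
            · rw [fstar_self]; exact h00
            · rw [fstar_zl hc0]; exact h2
          · rcases eq_or_ne c 0 with rfl | hc0
            · rw [fstar_self]; exact h00
            · rw [fstar_zr hc0]; exact h2
          · rw [fstar_self, Sym2.eq_swap]; exact h2
        · rw [fstar_zl hb0] at h2
          have hc0 : c = 0 := by
            rcases hz1 b c h2 with h | h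
            · omega
            · exact h
          subst hc0
          rintro z (rfl | rfl | rfl | rfl | rfl | rfl)
          · exact hab
          · exact h2
          · exact h00
          · rw [fstar_zr hb0]; exact hab
          · rw [fstar_self]; exact h2
          · rw [fstar_zl hb0]; exact hab
      · rcases eq_or_ne a 0 with rfl | ha0
        · rw [fstar_self] at h2
          rintro z (rfl | rfl | rfl | rfl | rfl | rfl)
          · exact hab
          · exact h2
          · rw [Sym2.eq_swap]; exact h2
          · rcases eq_or_ne c 0 with rfl | hc0
            · rw [fstar_self]; exact h00
            · rw [fstar_zl hc0]; exact h2
          · rcases eq_or_ne c 0 with rfl | hc0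
            · rw [fstar_self]; exact h00
            · rw [fstar_zr hc0]; exact h2
          · rw [fstar_self, Sym2.eq_swap]; exact h2
        · rw [fstar_zr ha0] at h2
          have hc0 : c = 0 := by
            rcases hz1 a c h2 with h | h
            · omega
            · exact h
          subst hc0
          rintro z (rfl | rfl | rfl | rfl | rfl | rfl)
          · exact hab
          · exact h00
          · rw [Sym2.eq_swap]; exact hab
          · rw [fstar_self]; exact hab
          · rw [fstar_zl ha0, Sym2.eq_swap]; exact h2
          · rw [fstar_zr ha0, Sym2.eq_swap]; exact h2
    · -- case (c): vacuous
      exfalso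
      obtain ⟨j, hj, hje⟩ := hdiag hab
      rw [Sym2.eq_iff] at hje
      have hab' : a = j ∧ b = j := by omega
      obtain ⟨rfl, rfl⟩ := hab'
      rw [fstar_self] at h2
      obtain ⟨j', hj', hje'⟩ := hdiag h2
      rw [Sym2.eq_iff] at hje'
      have := ne_zero_of_mem_I hj'
      omega
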